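/- arXiv:2504.03318 — 2 statements merged into one kernel-verified Lean document; each statement's English description precedes it below -/
import Mathlib

section
/- Let σ : ℝ → ℝ be η-Lipschitz and let Pool be a max-pooling operation on tensors in ℝ^{M×N×d} in which each entry of the input tensor appears in at most m pooling windows. Then the composition Pool ∘ σ (applied entrywise) is m^{1/p}·η-Lipschitz with respect to the entrywise ℓ_p norm for every p ≥ 1. -/
/-!
Since `max` is `1`-Lipschitz in each argument, the pooled difference over a window `A i` is at
most `η |X t - Y t|` for some `t ∈ A i`, so its `p`-th power is at most `η ^ p` times the
`p`-th power sum over the window. Summing over windows counts every input entry at most `m`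
times, giving `m η ^ p ‖X - Y‖ₚ ^ p`; take `p`-th roots.
-/

open Finset

section SupDifference

variable {α β : Type*} [AddCommGroup β] [LinearOrder β] [IsOrderedAddMonoid β]
  (s : Finset α) (hs : s.Nonempty)

theorem Finset.sup'_le_sup'_add_sup'_abs_sub (f g : α → β) :
    s.sup' hs f ≤ s.sup' hs g + s.sup' hs (fun a => |f a - g a|) :=
  sup'_le _ _ fun a ha =>
    calc f a ≤ g a + |f a - g a| := sub_le_iff_le_add'.mp (le_abs_self _)
      _ ≤ _ := add_le_add (le_sup' g ha) (le_sup' (fun a => |f a - g a|) ha)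

theorem Finset.abs_sup'_sub_sup'_le (f g : α → β) :
    |s.sup' hs f - s.sup' hs g| ≤ s.sup' hs (fun a => |f a - g a|) := by
  have hfg := s.sup'_le_sup'_add_sup'_abs_sub hs f g
  have hgf := s.sup'_le_sup'_add_sup'_abs_sub hs g f
  simp only [abs_sub_comm (g _)] at hgf
  exact abs_sub_le_iff.mpr ⟨sub_le_iff_le_add'.mpr hfg, sub_le_iff_le_add'.mpr hgf⟩

end SupDifference

theorem Finset.exists_abs_sup'_comp_sub_sup'_comp_le {α : Type*} {σ : ℝ → ℝ} {η : ℝ}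
    (hσ : ∀ a b : ℝ, |σ a - σ b| ≤ η * |a - b|) (s : Finset α) (hs : s.Nonempty)
    (x y : α → ℝ) :
    ∃ t ∈ s, |s.sup' hs (fun a => σ (x a)) - s.sup' hs (fun a => σ (y a))| ≤ η * |x t - y t| := by
  obtain ⟨t, ht, hsup⟩ := s.exists_mem_eq_sup' hs (fun a => |σ (x a) - σ (y a)|)
  exact ⟨t, ht, (s.abs_sup'_sub_sup'_le hs _ _).trans (hsup.trans_le (hσ _ _))⟩

theorem Finset.abs_sup'_comp_sub_sup'_comp_rpow_le {α : Type*} {σ : ℝ → ℝ} {η : ℝ} (hη : 0 ≤ η)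
    (hσ : ∀ a b : ℝ, |σ a - σ b| ≤ η * |a - b|) {p : ℝ} (hp : 0 ≤ p) (s : Finset α)
    (hs : s.Nonempty) (x y : α → ℝ) :
    |s.sup' hs (fun a => σ (x a)) - s.sup' hs (fun a => σ (y a))| ^ p ≤
      η ^ p * ∑ a ∈ s, |x a - y a| ^ p := by
  obtain ⟨t, ht, hle⟩ := s.exists_abs_sup'_comp_sub_sup'_comp_le hσ hs x y
  calc _ ≤ (η * |x t - y t|) ^ p := Real.rpow_le_rpow (abs_nonneg _) hle hp
    _ = η ^ p * |x t - y t| ^ p := Real.mul_rpow hη (abs_nonneg _)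
    _ ≤ η ^ p * ∑ a ∈ s, |x a - y a| ^ p := by
      gcongr
      exact single_le_sum (f := fun a => |x a - y a| ^ p)
        (fun a _ => Real.rpow_nonneg (abs_nonneg _) p) ht

theorem Finset.sum_sum_le_nsmul_sum_of_card_filter_mem_le {ι α β : Type*} [Fintype ι]
    [Fintype α] [DecidableEq α] [AddCommMonoid β] [PartialOrder β] [IsOrderedAddMonoid β]
    (A : ι → Finset α) {m : ℕ} (hA : ∀ a, #{i | a ∈ A i} ≤ m) {f : α → β} (hf : ∀ a, 0 ≤ f a) :
    ∑ i, ∑ a ∈ A i, f a ≤ m • ∑ a, f a := by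
  rw [sum_comm' (t' := univ) (s' := fun a => {i | a ∈ A i}) (by simp), smul_sum]
  simp only [sum_const]
  exact sum_le_sum fun a _ => nsmul_le_nsmul_left (hf a) (hA a)

theorem pool_comp_activation_lipschitz_general (M N d : ℕ) {ι : Type*} [Fintype ι]
    (σ : ℝ → ℝ) (η : ℝ) (hη : 0 ≤ η)
    (hσ : ∀ a b : ℝ, |σ a - σ b| ≤ η * |a - b|)
    (A : ι → Finset (Fin M × Fin N × Fin d)) (hA : ∀ i, (A i).Nonempty)
    (m : ℕ)
    (hreuse : ∀ s : Fin M × Fin N × Fin d,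
      (Finset.univ.filter (fun i : ι => s ∈ A i)).card ≤ m)
    (p : ℝ) (hp : 1 ≤ p)
    (X Y : Fin M × Fin N × Fin d → ℝ) :
    (∑ i : ι, |(A i).sup' (hA i) (fun s => σ (X s)) -
        (A i).sup' (hA i) (fun s => σ (Y s))| ^ p) ^ (1 / p) ≤
      (m : ℝ) ^ (1 / p) * η *
        (∑ s : Fin M × Fin N × Fin d, |X s - Y s| ^ p) ^ (1 / p) := by
  have hp0 : 0 < p := one_pos.trans_le hp
  have hdist : ∀ s, 0 ≤ |X s - Y s| ^ p := fun s => Real.rpow_nonneg (abs_nonneg _) p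
  have hsum : ∑ i, |(A i).sup' (hA i) (fun s => σ (X s)) -
        (A i).sup' (hA i) (fun s => σ (Y s))| ^ p ≤
      (m : ℝ) * η ^ p * ∑ s, |X s - Y s| ^ p :=
    calc _ ≤ ∑ i, η ^ p * ∑ s ∈ A i, |X s - Y s| ^ p := sum_le_sum fun i _ =>
          (A i).abs_sup'_comp_sub_sup'_comp_rpow_le hη hσ hp0.le (hA i) X Y
      _ = η ^ p * ∑ i, ∑ s ∈ A i, |X s - Y s| ^ p := (mul_sum ..).symm
      _ ≤ η ^ p * (m • ∑ s, |X s - Y s| ^ p) := by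
          gcongr
          exact sum_sum_le_nsmul_sum_of_card_filter_mem_le A hreuse hdist
      _ = _ := by rw [nsmul_eq_mul]; ring
  calc _ ≤ ((m : ℝ) * η ^ p * ∑ s, |X s - Y s| ^ p) ^ (1 / p) :=
        Real.rpow_le_rpow (sum_nonneg fun i _ => Real.rpow_nonneg (abs_nonneg _) p) hsum
          (one_div_nonneg.mpr hp0.le)
    _ = _ := by
      rw [Real.mul_rpow (by positivity) (sum_nonneg fun s _ => hdist s),
        Real.mul_rpow (Nat.cast_nonneg m) (Real.rpow_nonneg hη p), one_div,
        Real.rpow_rpow_inv hη hp0.ne']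

/-- Max-pooling composed with an entrywise `η`-Lipschitz activation is
`m^{1/p}·η`-Lipschitz w.r.t. the entrywise `ℓ_p` norm, where each input entry is
used in at most `m` pooling windows. -/
theorem pool_comp_activation_lipschitz (M N d : ℕ) {ι : Type*} [Fintype ι]
    (σ : ℝ → ℝ) (η : ℝ) (hη : 0 ≤ η)
    (hσ : ∀ a b : ℝ, |σ a - σ b| ≤ η * |a - b|)
    (A : ι → Finset (Fin M × Fin N × Fin d)) (hA : ∀ i, (A i).Nonempty)
    (m : ℕ) (hm : 0 < m)
    (hreuse : ∀ s : Fin M × Fin N × Fin d,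
      (Finset.univ.filter (fun i : ι => s ∈ A i)).card ≤ m)
    (p : ℝ) (hp : 1 ≤ p)
    (X Y : Fin M × Fin N × Fin d → ℝ) :
    (∑ i : ι, |(A i).sup' (hA i) (fun s => σ (X s)) -
        (A i).sup' (hA i) (fun s => σ (Y s))| ^ p) ^ (1 / p) ≤
      (m : ℝ) ^ (1 / p) * η *
        (∑ s : Fin M × Fin N × Fin d, |X s - Y s| ^ p) ^ (1 / p) :=
  pool_comp_activation_lipschitz_general M N d σ η hη hσ A hA m hreuse p hp X Y
end

section
/- Maurey-type sparsification: let V₁,…,V_N be elements of a Hilbert space with ‖Vᵢ‖ ≤ b for all i, and let x = Σᵢ cᵢVᵢ be a convex combination (cᵢ ≥ 0, Σcᵢ = 1). Then for every positive integer ω there exist indices i₁,…,i_ω (with repetition allowed) such that ‖x − (1/ω)Σ_{j=1}^{ω} V_{i_j}‖² ≤ b²/ω. -/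
/-!
Sampling `ω` indices i.i.d. from the distribution `c` gives an empirical mean whose expected squared
distance to `x` is the variance `∑ cᵢ ‖x - Vᵢ‖² ≤ b²` divided by `ω`. We derandomise this greedily:
by the parallel-axis identity `∑ cᵢ ‖y - Vᵢ‖² = ‖y - x‖² + ∑ cᵢ ‖x - Vᵢ‖²`, every `y` admits an index
`i` with `‖y - Vᵢ‖² ≤ ‖y - x‖² + b²`, so the partial sums `∑_{j<k} V_{i_j}` can be chosen to stay
within squared distance `k b²` of `k • x`.
-/

open Finset

lemma exists_norm_nsmul_sub_sum_sq_le {ι E : Type*} [SeminormedAddCommGroup E] {V : ι → E}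
    {x : E} {B : ℝ} (hstep : ∀ y, ∃ i, ‖y - V i‖ ^ 2 ≤ ‖y - x‖ ^ 2 + B) :
    ∀ k : ℕ, ∃ idx : Fin k → ι, ‖k • x - ∑ j, V (idx j)‖ ^ 2 ≤ k * B
  | 0 => ⟨Fin.elim0, by simp⟩
  | k + 1 => by
    obtain ⟨idx, hidx⟩ := exists_norm_nsmul_sub_sum_sq_le hstep k
    obtain ⟨i, hi⟩ := hstep ((k + 1) • x - ∑ j, V (idx j))
    refine ⟨Fin.snoc idx i, ?_⟩
    have hshift : (k + 1) • x - ∑ j, V (idx j) - x = k • x - ∑ j, V (idx j) := by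
      rw [succ_nsmul]; abel
    rw [Fin.sum_univ_castSucc]
    simp only [Fin.snoc_castSucc, Fin.snoc_last, ← sub_sub]
    push_cast
    linarith [hshift ▸ hi]

section ConvexCombination

variable {ι E : Type*} [Fintype ι] [NormedAddCommGroup E] [InnerProductSpace ℝ E]

lemma exists_le_sum_mul_of_sum_eq_one {c f : ι → ℝ} (hc0 : ∀ i, 0 ≤ c i) (hc1 : ∑ i, c i = 1) :
    ∃ i, f i ≤ ∑ i, c i * f i := by
  obtain ⟨i, -, hi⟩ := (concaveOn_id convex_univ).exists_le_of_centerMass (t := univ)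
    (fun i _ ↦ hc0 i) (hc1 ▸ one_pos) (fun i _ ↦ Set.mem_univ (f i))
  exact ⟨i, by simpa [centerMass, hc1] using hi⟩

lemma sum_mul_norm_sub_sq_eq {c : ι → ℝ} (hc1 : ∑ i, c i = 1) (V : ι → E) (y : E) :
    ∑ i, c i * ‖y - V i‖ ^ 2 =
      ‖y - ∑ i, c i • V i‖ ^ 2 + ∑ i, c i * ‖∑ i, c i • V i - V i‖ ^ 2 := by
  set x := ∑ i, c i • V i
  have hcentered : ∑ i, c i • (x - V i) = 0 := by
    simp only [smul_sub, sum_sub_distrib, ← sum_smul, hc1, one_smul, x, sub_self]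
  calc ∑ i, c i * ‖y - V i‖ ^ 2
      = ∑ i, (c i * ‖y - x‖ ^ 2 + 2 * inner ℝ (y - x) (c i • (x - V i))
          + c i * ‖x - V i‖ ^ 2) := by
        refine sum_congr rfl fun i _ ↦ ?_
        rw [show y - V i = (y - x) + (x - V i) by abel, norm_add_sq_real, inner_smul_right]
        ring
    _ = ‖y - x‖ ^ 2 + ∑ i, c i * ‖x - V i‖ ^ 2 := by
        rw [sum_add_distrib, sum_add_distrib, ← sum_mul, hc1, ← mul_sum, ← inner_sum,
          hcentered, inner_zero_right]
        ring

lemma sum_mul_norm_sub_sq_le {c : ι → ℝ} (hc0 : ∀ i, 0 ≤ c i) (hc1 : ∑ i, c i = 1)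
    {V : ι → E} {b : ℝ} (hb : ∀ i, ‖V i‖ ≤ b) :
    ∑ i, c i * ‖∑ i, c i • V i - V i‖ ^ 2 ≤ b ^ 2 := by
  have hsecond := sum_mul_norm_sub_sq_eq hc1 V 0
  simp only [zero_sub, norm_neg] at hsecond
  calc ∑ i, c i * ‖∑ i, c i • V i - V i‖ ^ 2
      ≤ ∑ i, c i * ‖V i‖ ^ 2 := by linarith [sq_nonneg ‖∑ i, c i • V i‖]
    _ ≤ ∑ i, c i * b ^ 2 := by
        gcongr with i
        · exact hc0 i
        · exact hb i
    _ = b ^ 2 := by rw [← sum_mul, hc1, one_mul]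

lemma exists_norm_sub_sq_le {c : ι → ℝ} (hc0 : ∀ i, 0 ≤ c i) (hc1 : ∑ i, c i = 1)
    {V : ι → E} {b : ℝ} (hb : ∀ i, ‖V i‖ ≤ b) (y : E) :
    ∃ i, ‖y - V i‖ ^ 2 ≤ ‖y - ∑ i, c i • V i‖ ^ 2 + b ^ 2 := by
  obtain ⟨i, hi⟩ := exists_le_sum_mul_of_sum_eq_one (f := fun i ↦ ‖y - V i‖ ^ 2) hc0 hc1
  refine ⟨i, hi.trans ?_⟩
  rw [sum_mul_norm_sub_sq_eq hc1]
  linarith [sum_mul_norm_sub_sq_le hc0 hc1 hb]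

end ConvexCombination

/-- Maurey-type sparsification: a convex combination of vectors of norm at most
`b` in a real Hilbert space can be approximated by an average of `ω` of them
with squared error at most `b²/ω`. -/
theorem maurey_sparsification
    {E : Type*} [NormedAddCommGroup E] [InnerProductSpace ℝ E]
    (N : ℕ) (V : Fin N → E) (b : ℝ) (hb : ∀ i, ‖V i‖ ≤ b)
    (c : Fin N → ℝ) (hc0 : ∀ i, 0 ≤ c i) (hc1 : ∑ i, c i = 1)
    (x : E) (hx : x = ∑ i, c i • V i)
    (ω : ℕ) (hω : 0 < ω) :
    ∃ idx : Fin ω → Fin N,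
      ‖x - (1 / ω : ℝ) • ∑ j : Fin ω, V (idx j)‖ ^ 2 ≤ b ^ 2 / ω := by
  subst hx
  obtain ⟨idx, hidx⟩ := exists_norm_nsmul_sub_sum_sq_le (exists_norm_sub_sq_le hc0 hc1 hb) ω
  refine ⟨idx, ?_⟩
  have hω' : (0 : ℝ) < ω := Nat.cast_pos.mpr hω
  have hscale : ∑ i, c i • V i - (1 / ω : ℝ) • ∑ j, V (idx j)
      = (1 / ω : ℝ) • (ω • ∑ i, c i • V i - ∑ j, V (idx j)) := by
    rw [smul_sub, ← Nat.cast_smul_eq_nsmul ℝ, smul_smul, one_div_mul_cancel hω'.ne', one_smul]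
  rw [hscale, norm_smul, mul_pow, Real.norm_of_nonneg (by positivity)]
  calc (1 / ω : ℝ) ^ 2 * ‖ω • ∑ i, c i • V i - ∑ j, V (idx j)‖ ^ 2
      ≤ (1 / ω) ^ 2 * (ω * b ^ 2) := by gcongr
    _ = b ^ 2 / ω := by field_simp
end
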